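/- arXiv:1306.0325 — 4 statements merged into one kernel-verified Lean document; each statement's English description precedes it below -/
import Mathlib

section
/- Let x, y ∈ ℝ^d with x ≠ 0 and suppose 0 < λ₁'‖x‖² ≤ ⟨x, y⟩ ≤ λ₂'‖x‖² and ‖y‖ ≤ C‖x‖ for constants 0 < λ₁' ≤ λ₂' and C > 0. Then there exists a symmetric positive definite d×d matrix M with y = Mx and all eigenvalues of M contained in an interval [λ₁, λ₂] with 0 < λ₁ ≤ λ₂ < ∞, where λ₁ and λ₂ depend only on λ₁', λ₂', C. -/
/-!
Take `c = λ₁'/2` and `w = y - c x`. Then `⟨x, w⟩ ≥ c‖x‖² > 0`, and the rank-one update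
`M = c I + w wᵀ / ⟨x, w⟩` of `c I` is positive definite with `M x = c x + w = y`. Its quadratic
form is `c‖v‖² + ⟨w, v⟩² / ⟨x, w⟩`, so by Cauchy–Schwarz its eigenvalues lie in
`[c, c + ‖w‖² / ⟨x, w⟩]`, and `‖w‖² ≤ C²‖x‖²` bounds the upper end by `c + 2C²/λ₁'`.
-/

open scoped RealInnerProductSpace

namespace Matrix

variable {n : Type*} [Fintype n]

theorem dotProduct_sq_le_dotProduct_self_mul (u v : n → ℝ) :
    (u ⬝ᵥ v) ^ 2 ≤ (u ⬝ᵥ u) * (v ⬝ᵥ v) := by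
  simpa only [dotProduct, sq] using Finset.sum_mul_sq_le_sq_mul_sq Finset.univ u v

variable [DecidableEq n]

theorem IsHermitian.eigenvalues_mem_Icc_of_dotProduct_mulVec {A : Matrix n n ℝ}
    (hA : A.IsHermitian) {a b : ℝ}
    (hab : ∀ v : n → ℝ, a * (v ⬝ᵥ v) ≤ v ⬝ᵥ (A *ᵥ v) ∧ v ⬝ᵥ (A *ᵥ v) ≤ b * (v ⬝ᵥ v))
    (i : n) : hA.eigenvalues i ∈ Set.Icc a b := by
  set v := hA.eigenvectorBasis i
  have hvv : ⇑v ⬝ᵥ ⇑v = 1 := by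
    have hv : ⟪v, v⟫ = 1 := by
      rw [real_inner_self_eq_norm_sq, hA.eigenvectorBasis.orthonormal.1 i, one_pow]
    rwa [EuclideanSpace.inner_eq_star_dotProduct, star_trivial] at hv
  have h := hab v
  rw [hvv, mul_one, mul_one] at h
  rw [hA.eigenvalues_eq i, star_trivial, RCLike.re_to_real]
  exact h

variable (c a : ℝ) (w : n → ℝ)

theorem smul_one_add_smul_vecMulVec_mulVec (v : n → ℝ) :
    (c • 1 + a • vecMulVec w w) *ᵥ v = c • v + (a * (w ⬝ᵥ v)) • w := by
  rw [add_mulVec, smul_mulVec, one_mulVec, smul_mulVec, vecMulVec_mulVec, op_smul_eq_smul,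
    smul_smul]

theorem dotProduct_smul_one_add_smul_vecMulVec_mulVec (v : n → ℝ) :
    v ⬝ᵥ ((c • 1 + a • vecMulVec w w) *ᵥ v) = c * (v ⬝ᵥ v) + a * (w ⬝ᵥ v) ^ 2 := by
  rw [smul_one_add_smul_vecMulVec_mulVec, dotProduct_add, dotProduct_smul, dotProduct_smul,
    dotProduct_comm v w, smul_eq_mul, smul_eq_mul]
  ring

variable {c a}

theorem posDef_smul_one_add_smul_vecMulVec (hc : 0 < c) (ha : 0 ≤ a) :
    (c • 1 + a • vecMulVec w w).PosDef := by
  refine (PosDef.one.smul hc).add_posSemidef (PosSemidef.smul ?_ ha)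
  simpa using posSemidef_vecMulVec_self_star w

theorem eigenvalues_smul_one_add_smul_vecMulVec_mem_Icc (hc : 0 < c)
    (ha : 0 ≤ a) (i : n) :
    (posDef_smul_one_add_smul_vecMulVec w hc ha).1.eigenvalues i ∈
      Set.Icc c (c + a * (w ⬝ᵥ w)) := by
  refine IsHermitian.eigenvalues_mem_Icc_of_dotProduct_mulVec _ (fun v => ?_) i
  rw [dotProduct_smul_one_add_smul_vecMulVec_mulVec]
  have hCS := dotProduct_sq_le_dotProduct_self_mul w v
  constructor <;> nlinarith [mul_nonneg ha (sq_nonneg (w ⬝ᵥ v))]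

theorem exists_posDef_mulVec_eq_of_inner_pos (x y : EuclideanSpace ℝ n)
    (hc : 0 < c) (hs : 0 < ⟪x, y - c • x⟫) :
    ∃ (M : Matrix n n ℝ) (hM : M.PosDef), ⇑y = M *ᵥ ⇑x ∧
      ∀ i, hM.1.eigenvalues i ∈ Set.Icc c (c + ‖y - c • x‖ ^ 2 / ⟪x, y - c • x⟫) := by
  set w := y - c • x
  have hwx : ⇑w ⬝ᵥ ⇑x = ⟪x, w⟫ := by
    rw [EuclideanSpace.inner_eq_star_dotProduct, star_trivial]
  have hww : ⇑w ⬝ᵥ ⇑w = ‖w‖ ^ 2 := by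
    rw [← real_inner_self_eq_norm_sq, EuclideanSpace.inner_eq_star_dotProduct, star_trivial]
  have ha : 0 ≤ ⟪x, w⟫⁻¹ := inv_nonneg.2 hs.le
  refine ⟨_, posDef_smul_one_add_smul_vecMulVec (⇑w) hc ha, ?_, fun i => ?_⟩
  · rw [smul_one_add_smul_vecMulVec_mulVec, hwx, inv_mul_cancel₀ hs.ne', one_smul]
    simp [w]
  · simpa [hww, div_eq_inv_mul] using
      eigenvalues_smul_one_add_smul_vecMulVec_mem_Icc (⇑w) hc ha i

end Matrix

section InnerProductSpace

variable {E : Type*} [NormedAddCommGroup E] [InnerProductSpace ℝ E] {x y : E} {l C : ℝ}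

theorem half_mul_norm_sq_le_inner_sub_half_smul (h : l * ‖x‖ ^ 2 ≤ ⟪x, y⟫) :
    l / 2 * ‖x‖ ^ 2 ≤ ⟪x, y - (l / 2) • x⟫ := by
  rw [inner_sub_right, real_inner_smul_right, real_inner_self_eq_norm_sq]
  linarith

theorem norm_sub_half_smul_sq_le (hl : 0 ≤ l) (h : l * ‖x‖ ^ 2 ≤ ⟪x, y⟫) (hy : ‖y‖ ≤ C * ‖x‖) :
    ‖y - (l / 2) • x‖ ^ 2 ≤ C ^ 2 * ‖x‖ ^ 2 := by
  rw [norm_sub_sq_real, real_inner_smul_right, real_inner_comm, norm_smul,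
    Real.norm_of_nonneg (by positivity)]
  have hy2 : ‖y‖ ^ 2 ≤ (C * ‖x‖) ^ 2 := pow_le_pow_left₀ (norm_nonneg y) hy 2
  nlinarith [mul_le_mul_of_nonneg_left h hl]

end InnerProductSpace

theorem stmt1_general (l1' l2' C : ℝ) (hl1' : 0 < l1') :
    ∃ l1 l2 : ℝ, 0 < l1 ∧ l1 ≤ l2 ∧
      ∀ {d : ℕ} (x y : EuclideanSpace ℝ (Fin d)), x ≠ 0 →
        l1' * ‖x‖ ^ 2 ≤ ⟪x, y⟫ → ⟪x, y⟫ ≤ l2' * ‖x‖ ^ 2 → ‖y‖ ≤ C * ‖x‖ →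
        ∃ (M : Matrix (Fin d) (Fin d) ℝ) (hM : M.PosDef),
          (y : Fin d → ℝ) = M.mulVec x ∧
          ∀ i, l1 ≤ hM.1.eigenvalues i ∧ hM.1.eigenvalues i ≤ l2 := by
  refine ⟨l1' / 2, l1' / 2 + 2 * C ^ 2 / l1', by positivity,
    le_add_of_nonneg_right (by positivity), fun {d} x y hx h1 _ h3 => ?_⟩
  have hxn : 0 < ‖x‖ := norm_pos_iff.2 hx
  have hs := half_mul_norm_sq_le_inner_sub_half_smul h1
  have hs_pos : 0 < ⟪x, y - (l1' / 2) • x⟫ := lt_of_lt_of_le (by positivity) hs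
  obtain ⟨M, hM, hyM, heig⟩ :=
    Matrix.exists_posDef_mulVec_eq_of_inner_pos x y (half_pos hl1') hs_pos
  have hratio : ‖y - (l1' / 2) • x‖ ^ 2 / ⟪x, y - (l1' / 2) • x⟫ ≤ 2 * C ^ 2 / l1' := by
    rw [div_le_iff₀ hs_pos]
    calc ‖y - (l1' / 2) • x‖ ^ 2 ≤ C ^ 2 * ‖x‖ ^ 2 := norm_sub_half_smul_sq_le hl1'.le h1 h3
      _ = 2 * C ^ 2 / l1' * (l1' / 2 * ‖x‖ ^ 2) := by field_simp
      _ ≤ 2 * C ^ 2 / l1' * ⟪x, y - (l1' / 2) • x⟫ := by gcongr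
  exact ⟨M, hM, hyM, fun i => ⟨(heig i).1, (heig i).2.trans (by linarith)⟩⟩

theorem stmt1 (l1' l2' C : ℝ) (hl1' : 0 < l1') (hl12' : l1' ≤ l2') (hC : 0 < C) :
    ∃ l1 l2 : ℝ, 0 < l1 ∧ l1 ≤ l2 ∧
      ∀ {d : ℕ} (x y : EuclideanSpace ℝ (Fin d)), x ≠ 0 →
        l1' * ‖x‖ ^ 2 ≤ ⟪x, y⟫ → ⟪x, y⟫ ≤ l2' * ‖x‖ ^ 2 → ‖y‖ ≤ C * ‖x‖ →
        ∃ (M : Matrix (Fin d) (Fin d) ℝ) (hM : M.PosDef),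
          (y : Fin d → ℝ) = M.mulVec x ∧
          ∀ i, l1 ≤ hM.1.eigenvalues i ∧ hM.1.eigenvalues i ≤ l2 :=
  stmt1_general l1' l2' C hl1'
end

section
/- Let X be a real random variable of the form X = aθ + ξ with a, θ ∈ ℝ fixed, where ξ satisfies E[ξ] = E[ξ³] = 0, E[ξ²] = σ² > 0, and E[ξ⁴] = c σ⁴ with 0 < c < 5. Then for ρ = (9−c)/4, E[(X² − ρσ²)²] = (a²θ² + ((c+3)/4)σ²)². -/
/-!
Expanding `X = b + ξ` binomially and using `E[ξ] = E[ξ³] = 0` gives `E[X²] = b² + σ²` and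
`E[X⁴] = b⁴ + 6b²σ² + cσ⁴`, so `E[(X² - ρσ²)²] = E[X⁴] - 2ρσ²E[X²] + ρ²σ⁴` is a quadratic in `b²`.
It equals `(b² + (3 - ρ)σ²)²` exactly when `c - 2ρ = (3 - ρ)² - ρ²`, i.e. `ρ = (9 - c) / 4`.
-/

open MeasureTheory Finset

lemma const_add_pow_eq_sum (b : ℝ) (n : ℕ) (x : ℝ) :
    (b + x) ^ n = ∑ k ∈ range (n + 1), (b ^ (n - k) * n.choose k) * x ^ k := by
  rw [add_comm, add_pow]
  exact sum_congr rfl fun k _ => by ring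

section Moments

variable {Ω : Type*} [MeasurableSpace Ω] {μ : Measure Ω} {ξ : Ω → ℝ} {n : ℕ}

lemma integrable_const_add_pow (hint : ∀ k ≤ n, Integrable (fun ω => ξ ω ^ k) μ) (b : ℝ) :
    Integrable (fun ω => (b + ξ ω) ^ n) μ := by
  simp_rw [const_add_pow_eq_sum]
  exact integrable_finsetSum _ fun k hk =>
    (hint k (Nat.lt_succ_iff.mp (mem_range.mp hk))).const_mul _

lemma integral_const_add_pow (hint : ∀ k ≤ n, Integrable (fun ω => ξ ω ^ k) μ) (b : ℝ) :
    ∫ ω, (b + ξ ω) ^ n ∂μ =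
      ∑ k ∈ range (n + 1), (b ^ (n - k) * n.choose k) * ∫ ω, ξ ω ^ k ∂μ := by
  simp_rw [const_add_pow_eq_sum]
  rw [integral_finsetSum _ fun k hk =>
    (hint k (Nat.lt_succ_iff.mp (mem_range.mp hk))).const_mul _]
  simp_rw [integral_const_mul]

lemma integral_sq_sub_const_sq [IsProbabilityMeasure μ] {X : Ω → ℝ}
    (hX2 : Integrable (fun ω => X ω ^ 2) μ) (hX4 : Integrable (fun ω => X ω ^ 4) μ) (r : ℝ) :
    ∫ ω, (X ω ^ 2 - r) ^ 2 ∂μ = ∫ ω, X ω ^ 4 ∂μ - 2 * r * ∫ ω, X ω ^ 2 ∂μ + r ^ 2 := by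
  have hexpand : (fun ω => (X ω ^ 2 - r) ^ 2) = fun ω => X ω ^ 4 - 2 * r * X ω ^ 2 + r ^ 2 := by
    funext ω; ring
  have hdiff : Integrable (fun ω => X ω ^ 4 - 2 * r * X ω ^ 2) μ := hX4.sub (hX2.const_mul _)
  rw [hexpand, integral_add hdiff (integrable_const _), integral_sub hX4 (hX2.const_mul _),
    integral_const_mul, integral_const]
  simp

end Moments

theorem stmt9_general {Ω : Type*} [MeasurableSpace Ω] (μ : Measure Ω) [IsProbabilityMeasure μ]
    (ξ : Ω → ℝ) (a θ σ c : ℝ)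
    (hint : ∀ n : ℕ, n ≤ 4 → Integrable (fun ω => ξ ω ^ n) μ)
    (h1 : ∫ ω, ξ ω ∂μ = 0) (h3 : ∫ ω, ξ ω ^ 3 ∂μ = 0)
    (h2 : ∫ ω, ξ ω ^ 2 ∂μ = σ ^ 2)
    (h4 : ∫ ω, ξ ω ^ 4 ∂μ = c * σ ^ 4) :
    ∫ ω, ((a * θ + ξ ω) ^ 2 - ((9 - c) / 4) * σ ^ 2) ^ 2 ∂μ =
      (a ^ 2 * θ ^ 2 + ((c + 3) / 4) * σ ^ 2) ^ 2 := by
  have hint2 : ∀ k ≤ 2, Integrable (fun ω => ξ ω ^ k) μ := fun k hk => hint k (by omega)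
  have hX2 : ∫ ω, (a * θ + ξ ω) ^ 2 ∂μ = (a * θ) ^ 2 + σ ^ 2 := by
    simp [integral_const_add_pow hint2, sum_range_succ, h1, h2]
  have hX4 : ∫ ω, (a * θ + ξ ω) ^ 4 ∂μ = (a * θ) ^ 4 + 6 * (a * θ) ^ 2 * σ ^ 2 + c * σ ^ 4 := by
    rw [integral_const_add_pow hint]
    simp only [sum_range_succ, sum_range_zero, pow_zero, pow_one, integral_const, probReal_univ,
      smul_eq_mul, h1, h2, h3, h4]
    push_cast [Nat.choose]
    ring
  rw [integral_sq_sub_const_sq (integrable_const_add_pow hint2 _)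
    (integrable_const_add_pow hint _), hX2, hX4]
  ring

theorem stmt9 {Ω : Type*} [MeasurableSpace Ω] (μ : Measure Ω) [IsProbabilityMeasure μ]
    (ξ : Ω → ℝ) (a θ σ c : ℝ)
    (hint : ∀ n : ℕ, n ≤ 4 → Integrable (fun ω => ξ ω ^ n) μ)
    (h1 : ∫ ω, ξ ω ∂μ = 0) (h3 : ∫ ω, ξ ω ^ 3 ∂μ = 0)
    (h2 : ∫ ω, ξ ω ^ 2 ∂μ = σ ^ 2) (hσ : 0 < σ ^ 2)
    (h4 : ∫ ω, ξ ω ^ 4 ∂μ = c * σ ^ 4) (hc0 : 0 < c) (hc5 : c < 5) :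
    ∫ ω, ((a * θ + ξ ω) ^ 2 - ((9 - c) / 4) * σ ^ 2) ^ 2 ∂μ =
      (a ^ 2 * θ ^ 2 + ((c + 3) / 4) * σ ^ 2) ^ 2 :=
  stmt9_general μ ξ a θ σ c hint h1 h3 h2 h4
end

section
/- Let X = aθ + ξ with a, θ ∈ ℝ, where ξ satisfies E[ξ] = E[ξ³] = 0, E[ξ²] = σ² > 0, and E[ξ⁴] = cσ⁴ for some 0 < c < 5. Then E[min(X², (9−c)σ²/4)] ≥ (5−c)σ²/4. -/
/-!
Write `X = aθ + ξ` and `m = (9 - c)σ²/4`. Since `min x m = (x + m)/2 - |x - m|/2` and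
`|y| ≤ y²/(2s) + s/2` for every `s > 0` (the pointwise form of `E|Y| ≤ (E Y²)^{1/2}`),
`E[min(X², m)] ≥ (E X² + m)/2 - s/4 - E[(X² - m)²]/(4s)`. The moment conditions give
`E X² = a²θ² + σ²` and `E[(X² - m)²] = s²` with `s = a²θ² + (c + 3)σ²/4`, and this choice of `s`
turns the bound into `(5 - c)σ²/4`.
-/

open MeasureTheory

lemma quadratic_minorant_le_min (x m : ℝ) {s : ℝ} (hs : 0 < s) :
    x / 2 + m / 2 - s / 4 - (x - m) ^ 2 / (4 * s) ≤ min x m := by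
  rcases le_total x m with h | h
  · rw [min_eq_left h, ← sub_nonneg]
    have e : x - (x / 2 + m / 2 - s / 4 - (x - m) ^ 2 / (4 * s))
        = (x - m + s) ^ 2 / (4 * s) := by
      field_simp; ring
    rw [e]; positivity
  · rw [min_eq_right h, ← sub_nonneg]
    have e : m - (x / 2 + m / 2 - s / 4 - (x - m) ^ 2 / (4 * s))
        = (x - m - s) ^ 2 / (4 * s) := by
      field_simp; ring
    rw [e]; positivity

section Moments

variable {Ω : Type*} [MeasurableSpace Ω] {μ : Measure Ω}

lemma le_integral_min_const [IsProbabilityMeasure μ] {f : Ω → ℝ} (m : ℝ) {s : ℝ}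
    (hs : 0 < s) (hf : Integrable f μ) (hf2 : Integrable (fun ω => (f ω - m) ^ 2) μ) :
    (∫ ω, f ω ∂μ) / 2 + m / 2 - s / 4 - (∫ ω, (f ω - m) ^ 2 ∂μ) / (4 * s)
      ≤ ∫ ω, min (f ω) m ∂μ := by
  have hhalf : Integrable (fun ω => f ω / 2 + m / 2) μ :=
    (hf.div_const _).add (integrable_const _)
  have hmid : Integrable (fun ω => f ω / 2 + m / 2 - s / 4) μ := hhalf.sub (integrable_const _)
  have hlow : Integrable (fun ω => f ω / 2 + m / 2 - s / 4 - (f ω - m) ^ 2 / (4 * s)) μ :=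
    hmid.sub (hf2.div_const _)
  calc (∫ ω, f ω ∂μ) / 2 + m / 2 - s / 4 - (∫ ω, (f ω - m) ^ 2 ∂μ) / (4 * s)
      = ∫ ω, (f ω / 2 + m / 2 - s / 4 - (f ω - m) ^ 2 / (4 * s)) ∂μ := by
        rw [integral_sub hmid (hf2.div_const _), integral_sub hhalf (integrable_const _),
          integral_add (hf.div_const _) (integrable_const _)]
        simp [integral_div]
    _ ≤ ∫ ω, min (f ω) m ∂μ :=
        integral_mono hlow (hf.inf (integrable_const m)) fun ω => quadratic_minorant_le_min _ _ hs

variable {ξ : Ω → ℝ} {N : ℕ}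

lemma integrable_sum_mul_pow (hint : ∀ n : ℕ, n ≤ N → Integrable (fun ω => ξ ω ^ n) μ)
    (p : Fin (N + 1) → ℝ) :
    Integrable (fun ω => ∑ k : Fin (N + 1), p k * ξ ω ^ (k : ℕ)) μ :=
  integrable_finsetSum _ fun k _ => (hint k (Nat.lt_succ_iff.mp k.isLt)).const_mul _

lemma integral_sum_mul_pow (hint : ∀ n : ℕ, n ≤ N → Integrable (fun ω => ξ ω ^ n) μ)
    (p : Fin (N + 1) → ℝ) :
    ∫ ω, ∑ k : Fin (N + 1), p k * ξ ω ^ (k : ℕ) ∂μ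
      = ∑ k : Fin (N + 1), p k * ∫ ω, ξ ω ^ (k : ℕ) ∂μ := by
  rw [integral_finsetSum _ fun (k : Fin (N + 1)) _ =>
    (hint k (Nat.lt_succ_iff.mp k.isLt)).const_mul _]
  simp only [integral_const_mul]

lemma add_sq_eq_sum_mul_pow (b x : ℝ) :
    (b + x) ^ 2 = ∑ k : Fin 3, ![b ^ 2, 2 * b, 1] k * x ^ (k : ℕ) := by
  simp only [Fin.sum_univ_three, Matrix.cons_val, Fin.coe_ofNat_eq_mod, Nat.reduceMod]
  ring

lemma sq_add_sq_sub_eq_sum_mul_pow (b r x : ℝ) :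
    ((b + x) ^ 2 - r) ^ 2
      = ∑ k : Fin 5, ![(b ^ 2 - r) ^ 2, 4 * b * (b ^ 2 - r), 6 * b ^ 2 - 2 * r, 4 * b, 1] k
          * x ^ (k : ℕ) := by
  simp only [Fin.sum_univ_five, Matrix.cons_val, Fin.coe_ofNat_eq_mod, Nat.reduceMod]
  ring

lemma integrable_add_sq (hint : ∀ n : ℕ, n ≤ 2 → Integrable (fun ω => ξ ω ^ n) μ) (b : ℝ) :
    Integrable (fun ω => (b + ξ ω) ^ 2) μ := by
  simp_rw [add_sq_eq_sum_mul_pow]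
  exact integrable_sum_mul_pow hint _

lemma integrable_sq_add_sq_sub (hint : ∀ n : ℕ, n ≤ 4 → Integrable (fun ω => ξ ω ^ n) μ)
    (b r : ℝ) : Integrable (fun ω => ((b + ξ ω) ^ 2 - r) ^ 2) μ := by
  simp_rw [sq_add_sq_sub_eq_sum_mul_pow]
  exact integrable_sum_mul_pow hint _

variable [IsProbabilityMeasure μ] {σ : ℝ}

lemma integral_add_sq (hint : ∀ n : ℕ, n ≤ 2 → Integrable (fun ω => ξ ω ^ n) μ)
    (h1 : ∫ ω, ξ ω ∂μ = 0) (h2 : ∫ ω, ξ ω ^ 2 ∂μ = σ ^ 2) (b : ℝ) :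
    ∫ ω, (b + ξ ω) ^ 2 ∂μ = b ^ 2 + σ ^ 2 := by
  simp_rw [add_sq_eq_sum_mul_pow]
  rw [integral_sum_mul_pow hint]
  simp [Fin.sum_univ_three, h1, h2]

lemma integral_sq_add_sq_sub {c : ℝ} (hint : ∀ n : ℕ, n ≤ 4 → Integrable (fun ω => ξ ω ^ n) μ)
    (h1 : ∫ ω, ξ ω ∂μ = 0) (h3 : ∫ ω, ξ ω ^ 3 ∂μ = 0) (h2 : ∫ ω, ξ ω ^ 2 ∂μ = σ ^ 2)
    (h4 : ∫ ω, ξ ω ^ 4 ∂μ = c * σ ^ 4) (b r : ℝ) :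
    ∫ ω, ((b + ξ ω) ^ 2 - r) ^ 2 ∂μ
      = (b ^ 2 - r) ^ 2 + (6 * b ^ 2 - 2 * r) * σ ^ 2 + c * σ ^ 4 := by
  simp_rw [sq_add_sq_sub_eq_sum_mul_pow]
  rw [integral_sum_mul_pow hint]
  simp [Fin.sum_univ_five, h1, h2, h3, h4]

end Moments

theorem stmt10_general {Ω : Type*} [MeasurableSpace Ω] (μ : Measure Ω) [IsProbabilityMeasure μ]
    (ξ : Ω → ℝ) (a θ σ c : ℝ)
    (hint : ∀ n : ℕ, n ≤ 4 → Integrable (fun ω => ξ ω ^ n) μ)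
    (h1 : ∫ ω, ξ ω ∂μ = 0) (h3 : ∫ ω, ξ ω ^ 3 ∂μ = 0)
    (h2 : ∫ ω, ξ ω ^ 2 ∂μ = σ ^ 2) (hσ : 0 < σ ^ 2)
    (h4 : ∫ ω, ξ ω ^ 4 ∂μ = c * σ ^ 4) (hc0 : 0 < c) :
    (5 - c) * σ ^ 2 / 4 ≤ ∫ ω, min ((a * θ + ξ ω) ^ 2) ((9 - c) * σ ^ 2 / 4) ∂μ := by
  set b := a * θ
  set m := (9 - c) * σ ^ 2 / 4
  set s := b ^ 2 + (c + 3) * σ ^ 2 / 4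
  have hs : 0 < s := by positivity
  have hint2 : ∀ n : ℕ, n ≤ 2 → Integrable (fun ω => ξ ω ^ n) μ :=
    fun n hn => hint n (by omega)
  have hbound := le_integral_min_const m hs (integrable_add_sq hint2 b)
    (integrable_sq_add_sq_sub hint b m)
  rw [integral_add_sq hint2 h1 h2, integral_sq_add_sq_sub hint h1 h3 h2 h4] at hbound
  have hsq : (b ^ 2 - m) ^ 2 + (6 * b ^ 2 - 2 * m) * σ ^ 2 + c * σ ^ 4 = s ^ 2 := by ring
  rw [hsq] at hbound
  convert hbound using 1
  field_simp
  ring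

theorem stmt10 {Ω : Type*} [MeasurableSpace Ω] (μ : Measure Ω) [IsProbabilityMeasure μ]
    (ξ : Ω → ℝ) (a θ σ c : ℝ)
    (hint : ∀ n : ℕ, n ≤ 4 → Integrable (fun ω => ξ ω ^ n) μ)
    (h1 : ∫ ω, ξ ω ∂μ = 0) (h3 : ∫ ω, ξ ω ^ 3 ∂μ = 0)
    (h2 : ∫ ω, ξ ω ^ 2 ∂μ = σ ^ 2) (hσ : 0 < σ ^ 2)
    (h4 : ∫ ω, ξ ω ^ 4 ∂μ = c * σ ^ 4) (hc0 : 0 < c) (hc5 : c < 5) :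
    (5 - c) * σ ^ 2 / 4 ≤ ∫ ω, min ((a * θ + ξ ω) ^ 2) ((9 - c) * σ ^ 2 / 4) ∂μ :=
  stmt10_general μ ξ a θ σ c hint h1 h3 h2 hσ h4 hc0
end

section
/- Telescoping product bound for conditional eigenvalues: Let (F_k) be a filtration, let M_{k₀},…,M_k be symmetric positive definite random matrices with M_i measurable with respect to F_{i−1}, and suppose for constants 0 < λ₁ ≤ λ₂ that λ₁ ≤ E[Λ_(1)(M_i) | F_{i−2}] and Λ_(d)(M_i) ≤ λ₂ almost surely, and γ_i λ₂ ≤ 1 for all i. Then E ∏_{i=k₀}^{k} ‖I − γ_i M_i‖² ≤ ∏_{i=k₀}^{k} (1 − γ_i λ₁). -/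
/-!
Diagonalising `M = U D Uᴴ` gives `‖I - γ M‖ = max_j |1 - γ λ_j| ≤ 1 - γ Λ_(1)(M) ≤ 1` once
`γ Λ_(d)(M) ≤ 1`, so each factor `X_i = ‖I - γ_i M_i‖²` lies in `[0, 1]` and is dominated by
`1 - γ_i Λ_(1)(M_i)`. Hence `E[X_i | F_{i-2}] ≤ 1 - γ_i λ₁`. The factors with index below the
largest one, `k`, are `F_{k-2}`-measurable, so pulling them out of `E[· | F_{k-2}]` peels off
the factor `1 - γ_k λ₁`; induction on the index set finishes the proof.
-/

open MeasureTheory Set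
open scoped ComplexOrder

theorem Continuous.measurable_comp_matrix {Ω β 𝕜 n : Type*} {m : MeasurableSpace Ω} [Countable n]
    [TopologicalSpace β] [MeasurableSpace β] [BorelSpace β] [TopologicalSpace 𝕜]
    [SecondCountableTopology 𝕜] [MeasurableSpace 𝕜] [OpensMeasurableSpace 𝕜] {M : Ω → Matrix n n 𝕜}
    {g : Matrix n n 𝕜 → β} (hg : Continuous g) (hM : ∀ a b, Measurable[m] fun ω => M ω a b) :
    Measurable[m] fun ω => g (M ω) :=
  have hg' : Continuous fun A : n → n → 𝕜 => g A := hg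
  hg'.measurable.comp (measurable_pi_lambda _ fun a => measurable_pi_lambda _ (hM a))

namespace Matrix

variable {𝕜 n : Type*} [RCLike 𝕜] [Fintype n] [DecidableEq n] {A : Matrix n n 𝕜} {γ : ℝ}

open scoped Matrix.Norms.L2Operator in
lemma IsHermitian.norm_toEuclideanCLM_one_sub_smul_le (hA : A.IsHermitian) (hγ : 0 ≤ γ)
    (h : ∀ j, γ * hA.eigenvalues j ≤ 1) :
    ‖toEuclideanCLM (n := n) (𝕜 := 𝕜) (1 - γ • A)‖ ≤ 1 - γ * ⨅ j, hA.eigenvalues j := by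
  have hdiag : 1 - γ • A = Unitary.conjStarAlgAut 𝕜 _ hA.eigenvectorUnitary
      (diagonal fun j => ((1 - γ * hA.eigenvalues j : ℝ) : 𝕜)) := by
    conv_lhs => rw [hA.spectral_theorem]
    rw [RCLike.real_smul_eq_coe_smul (K := 𝕜), ← map_smul,
      ← map_one (Unitary.conjStarAlgAut 𝕜 _ hA.eigenvectorUnitary), ← map_sub]
    congr 1
    ext i j
    rcases eq_or_ne i j with rfl | hij <;> simp [*]
  rw [← cstar_norm_def, hdiag, Unitary.conjStarAlgAut_apply, ← Unitary.coe_star,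
    CStarRing.norm_mul_coe_unitary, CStarRing.norm_coe_unitary_mul, l2_opNorm_diagonal]
  have hinf (j : n) : γ * ⨅ i, hA.eigenvalues i ≤ γ * hA.eigenvalues j :=
    mul_le_mul_of_nonneg_left (ciInf_le (Finite.bddBelow_range _) j) hγ
  rcases isEmpty_or_nonempty n with hn | ⟨⟨j₀⟩⟩
  · simp [pi_norm_le_iff_of_nonneg]
  refine (pi_norm_le_iff_of_nonneg (by linarith [hinf j₀, h j₀])).2 fun j => ?_
  rw [RCLike.norm_ofReal, abs_of_nonneg (by linarith [h j])]
  linarith [hinf j]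

lemma PosSemidef.iInf_eigenvalues_nonneg (hA : A.PosSemidef) : 0 ≤ ⨅ j, hA.1.eigenvalues j :=
  Real.iInf_nonneg hA.eigenvalues_nonneg

lemma PosSemidef.sq_norm_toEuclideanCLM_one_sub_smul_le (hA : A.PosSemidef) (hγ : 0 ≤ γ)
    (h : ∀ j, γ * hA.1.eigenvalues j ≤ 1) :
    ‖toEuclideanCLM (n := n) (𝕜 := 𝕜) (1 - γ • A)‖ ^ 2 ≤ 1 - γ * ⨅ j, hA.1.eigenvalues j := by
  have hnorm := hA.1.norm_toEuclideanCLM_one_sub_smul_le hγ h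
  have hmin := mul_nonneg hγ hA.iInf_eigenvalues_nonneg
  exact (pow_le_of_le_one (norm_nonneg _) (by linarith) two_ne_zero).trans hnorm

lemma PosSemidef.sq_norm_toEuclideanCLM_one_sub_smul_mem_Icc (hA : A.PosSemidef) (hγ : 0 ≤ γ)
    (h : ∀ j, γ * hA.1.eigenvalues j ≤ 1) :
    ‖toEuclideanCLM (n := n) (𝕜 := 𝕜) (1 - γ • A)‖ ^ 2 ∈ Icc 0 1 :=
  ⟨sq_nonneg _, (hA.sq_norm_toEuclideanCLM_one_sub_smul_le hγ h).trans
    (by linarith [mul_nonneg hγ hA.iInf_eigenvalues_nonneg])⟩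

open scoped Matrix.Norms.L2Operator in
lemma measurable_sq_norm_toEuclideanCLM_one_sub_smul [MeasurableSpace 𝕜] [OpensMeasurableSpace 𝕜]
    {Ω : Type*} {m : MeasurableSpace Ω} {M : Ω → Matrix n n 𝕜}
    (hM : ∀ a b, Measurable[m] fun ω => M ω a b) (γ : ℝ) :
    Measurable[m] fun ω => ‖toEuclideanCLM (n := n) (𝕜 := 𝕜) (1 - γ • M ω)‖ ^ 2 :=
  ((continuous_const.sub (continuous_const_smul γ)).norm.pow 2).measurable_comp_matrix hM

end Matrix

section ConditionalExpectation

variable {Ω : Type*} {m m₀ : MeasurableSpace Ω} {μ : Measure Ω}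

lemma integrable_of_ae_mem_Icc [IsFiniteMeasure μ] {f : Ω → ℝ} {a b : ℝ}
    (hf : AEStronglyMeasurable f μ) (h : ∀ᵐ ω ∂μ, f ω ∈ Icc a b) : Integrable f μ :=
  Integrable.of_bound hf (max |a| |b|) <| h.mono fun _ hω => abs_le_max_abs_abs hω.1 hω.2

-- Integrability of `ω ↦ Λ_(1)(M ω)` comes from here, sparing a measurability proof for
-- eigenvalues: `μ[L|m] = 0` whenever `L` is not integrable.
lemma integrable_of_pos_le_condExp [NeZero μ] {L : Ω → ℝ} {l : ℝ} (hl : 0 < l)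
    (h : ∀ᵐ ω ∂μ, l ≤ μ[L|m] ω) : Integrable L μ := by
  by_contra hL
  rw [condExp_of_not_integrable hL] at h
  obtain ⟨ω, hω⟩ := h.exists
  exact hl.not_ge hω

lemma condExp_le_sub_mul_of_le_condExp [IsFiniteMeasure μ] (hm : m ≤ m₀) {X L : Ω → ℝ}
    {a b l : ℝ} (hb : 0 ≤ b) (hX : Integrable X μ) (hL : Integrable L μ)
    (hXL : ∀ᵐ ω ∂μ, X ω ≤ a - b * L ω) (hl : ∀ᵐ ω ∂μ, l ≤ μ[L|m] ω) :
    μ[X|m] ≤ᵐ[μ] fun _ => a - b * l := by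
  have haffine : μ[(fun _ => a) - b • L|m] =ᵐ[μ] fun ω => a - b * μ[L|m] ω := by
    filter_upwards [condExp_sub (integrable_const a) (hL.smul b) m, condExp_smul (m := m) b L]
      with ω hsub hsmul
    simp [hsub, hsmul, condExp_const hm]
  filter_upwards [condExp_mono (m := m) hX ((integrable_const a).sub (hL.smul b)) hXL, haffine, hl]
    with ω hmono heq hω
  rw [heq] at hmono
  linarith [mul_le_mul_of_nonneg_left hω hb]

lemma integral_mul_le_of_condExp_le (hm : m ≤ m₀) [SigmaFinite (μ.trim hm)] {f X : Ω → ℝ}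
    {c : ℝ} (hf : StronglyMeasurable[m] f) (hf0 : 0 ≤ᵐ[μ] f) (hfi : Integrable f μ)
    (hX : Integrable X μ) (hfX : Integrable (f * X) μ) (hc : μ[X|m] ≤ᵐ[μ] fun _ => c) :
    ∫ ω, f ω * X ω ∂μ ≤ c * ∫ ω, f ω ∂μ := calc
  ∫ ω, f ω * X ω ∂μ = ∫ ω, μ[f * X|m] ω ∂μ := (integral_condExp hm).symm
  _ ≤ ∫ ω, f ω * c ∂μ := by
    refine integral_mono_ae integrable_condExp (hfi.mul_const c) ?_
    filter_upwards [condExp_mul_of_stronglyMeasurable_left hf hfX hX, hc, hf0] with ω hpull hω hfω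
    rw [hpull, Pi.mul_apply]
    exact mul_le_mul_of_nonneg_left hω hfω
  _ = c * ∫ ω, f ω ∂μ := by rw [integral_mul_const, mul_comm]

end ConditionalExpectation

lemma integral_prod_le_prod_of_condExp_le {Ω : Type*} {m₀ : MeasurableSpace Ω} (μ : Measure Ω)
    [IsProbabilityMeasure μ] (F : Filtration ℤ m₀) (X : ℕ → Ω → ℝ) (c : ℕ → ℝ) (s : Finset ℕ)
    (hX : ∀ i ∈ s, StronglyMeasurable[F (i - 1)] (X i))
    (hX01 : ∀ i ∈ s, ∀ᵐ ω ∂μ, X i ω ∈ Icc 0 1) (hc : ∀ i ∈ s, 0 ≤ c i)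
    (hcond : ∀ i ∈ s, μ[X i|F (i - 2)] ≤ᵐ[μ] fun _ => c i) :
    ∫ ω, ∏ i ∈ s, X i ω ∂μ ≤ ∏ i ∈ s, c i := by
  induction s using Finset.induction_on_max with
  | empty => simp
  | insert a s hlt ih =>
    simp only [Finset.forall_mem_insert] at hX hX01 hc hcond
    have ha : a ∉ s := fun h => (hlt a h).false
    simp only [Finset.prod_insert ha]
    set f : Ω → ℝ := fun ω => ∏ i ∈ s, X i ω
    have hf : StronglyMeasurable[F (a - 2)] f := by
      refine Finset.stronglyMeasurable_fun_prod s fun i hi => (hX.2 i hi).mono (F.mono ?_)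
      have := hlt i hi
      omega
    have hf01 : ∀ᵐ ω ∂μ, f ω ∈ Icc 0 1 := by
      filter_upwards [(Filter.eventually_all_finset s).2 hX01.2] with ω hω
      exact ⟨Finset.prod_nonneg fun i hi => (hω i hi).1,
        Finset.prod_le_one (fun i hi => (hω i hi).1) fun i hi => (hω i hi).2⟩
    have hXa := (hX.1.mono (F.le _)).aestronglyMeasurable (μ := μ)
    have hfa := (hf.mono (F.le _)).aestronglyMeasurable (μ := μ)
    have hXi := integrable_of_ae_mem_Icc hXa hX01.1
    have hfX : Integrable (f * X a) μ := hXi.bdd_mul hfa (c := 1) <| hf01.mono fun ω hω => by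
      rw [Real.norm_eq_abs, abs_of_nonneg hω.1]; exact hω.2
    calc ∫ ω, X a ω * f ω ∂μ = ∫ ω, f ω * X a ω ∂μ := by simp only [mul_comm]
    _ ≤ c a * ∫ ω, f ω ∂μ := integral_mul_le_of_condExp_le (F.le _) hf
          (hf01.mono fun _ hω => hω.1) (integrable_of_ae_mem_Icc hfa hf01) hXi hfX hcond.1
    _ ≤ c a * ∏ i ∈ s, c i := mul_le_mul_of_nonneg_left (ih hX.2 hX01.2 hc.2 hcond.2) hc.1

lemma condExp_sq_norm_toEuclideanCLM_one_sub_smul_le {Ω 𝕜 n : Type*} [RCLike 𝕜] [MeasurableSpace 𝕜]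
    [OpensMeasurableSpace 𝕜] [Fintype n] [DecidableEq n] {m m₀ : MeasurableSpace Ω} {μ : Measure Ω}
    [IsProbabilityMeasure μ] (hm : m ≤ m₀) {M : Ω → Matrix n n 𝕜} (hM : ∀ ω, (M ω).PosSemidef)
    (hmeas : ∀ a b, Measurable fun ω => M ω a b) {γ l : ℝ} (hγ : 0 ≤ γ) (hl : 0 < l)
    (hup : ∀ᵐ ω ∂μ, ∀ j, γ * (hM ω).1.eigenvalues j ≤ 1)
    (hlow : ∀ᵐ ω ∂μ, l ≤ μ[fun ω => ⨅ j, (hM ω).1.eigenvalues j|m] ω) :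
    μ[fun ω => ‖Matrix.toEuclideanCLM (n := n) (𝕜 := 𝕜) (1 - γ • M ω)‖ ^ 2|m]
      ≤ᵐ[μ] fun _ => 1 - γ * l := by
  refine condExp_le_sub_mul_of_le_condExp hm hγ ?_ (integrable_of_pos_le_condExp hl hlow)
    (hup.mono fun ω h => (hM ω).sq_norm_toEuclideanCLM_one_sub_smul_le hγ h) hlow
  exact integrable_of_ae_mem_Icc
    (Matrix.measurable_sq_norm_toEuclideanCLM_one_sub_smul hmeas γ).aestronglyMeasurable
    (hup.mono fun ω h => (hM ω).sq_norm_toEuclideanCLM_one_sub_smul_mem_Icc hγ h)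

theorem stmt17_general {Ω : Type*} {m₀ : MeasurableSpace Ω} (μ : Measure Ω) [IsProbabilityMeasure μ]
    {d : ℕ} (F : Filtration ℤ m₀) (k₀ k : ℕ)
    (M : ℕ → Ω → Matrix (Fin d) (Fin d) ℝ) (γ : ℕ → ℝ) (l1 l2 : ℝ)
    (hl1 : 0 < l1) (hl12 : l1 ≤ l2)
    (hpos : ∀ i ω, (M i ω).PosDef)
    (hmeas : ∀ i, k₀ ≤ i → i ≤ k → ∀ a b, Measurable[F ((i : ℤ) - 1)] fun ω => M i ω a b)
    (hγ0 : ∀ i, k₀ ≤ i → i ≤ k → 0 ≤ γ i)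
    (hγ : ∀ i, k₀ ≤ i → i ≤ k → γ i * l2 ≤ 1)
    (hlow : ∀ i, k₀ ≤ i → i ≤ k →
      ∀ᵐ ω ∂μ, l1 ≤ (μ[fun ω' => ⨅ j, (hpos i ω').1.eigenvalues j | F ((i : ℤ) - 2)]) ω)
    (hup : ∀ i, k₀ ≤ i → i ≤ k → ∀ᵐ ω ∂μ, (⨆ j, (hpos i ω).1.eigenvalues j) ≤ l2) :
    ∫ ω, ∏ i ∈ Finset.Icc k₀ k,
        ‖Matrix.toEuclideanCLM (𝕜 := ℝ) (n := Fin d) (1 - γ i • M i ω)‖ ^ 2 ∂μ ≤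
      ∏ i ∈ Finset.Icc k₀ k, (1 - γ i * l1) := by
  have hpsd (i : ℕ) (ω : Ω) := (hpos i ω).posSemidef
  have heig (i : ℕ) (hi : k₀ ≤ i) (hik : i ≤ k) :
      ∀ᵐ ω ∂μ, ∀ j, γ i * (hpos i ω).1.eigenvalues j ≤ 1 :=
    (hup i hi hik).mono fun ω h j => (mul_le_mul_of_nonneg_left
      ((le_ciSup (Finite.bddAbove_range _) j).trans h) (hγ0 i hi hik)).trans (hγ i hi hik)
  refine integral_prod_le_prod_of_condExp_le μ F _ _ _ (fun i hi => ?_) (fun i hi => ?_)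
    (fun i hi => ?_) (fun i hi => ?_) <;> obtain ⟨hi, hik⟩ := Finset.mem_Icc.1 hi
  · exact (Matrix.measurable_sq_norm_toEuclideanCLM_one_sub_smul (hmeas i hi hik)
      _).stronglyMeasurable
  · exact (heig i hi hik).mono fun ω h =>
      (hpsd i ω).sq_norm_toEuclideanCLM_one_sub_smul_mem_Icc (hγ0 i hi hik) h
  · linarith [mul_le_mul_of_nonneg_left hl12 (hγ0 i hi hik), hγ i hi hik]
  · exact condExp_sq_norm_toEuclideanCLM_one_sub_smul_le (F.le _) (hpsd i)
      (fun a b => (hmeas i hi hik a b).mono (F.le _) le_rfl) (hγ0 i hi hik) hl1 (heig i hi hik)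
      (hlow i hi hik)

/-- Telescoping product bound for conditional eigenvalues of random matrices. -/
theorem stmt17 {Ω : Type*} {m₀ : MeasurableSpace Ω} (μ : Measure Ω) [IsProbabilityMeasure μ]
    {d : ℕ} (hd : 0 < d) (F : Filtration ℤ m₀) (k₀ k : ℕ) (hk : k₀ ≤ k)
    (M : ℕ → Ω → Matrix (Fin d) (Fin d) ℝ) (γ : ℕ → ℝ) (l1 l2 : ℝ)
    (hl1 : 0 < l1) (hl12 : l1 ≤ l2)
    (hpos : ∀ i ω, (M i ω).PosDef)
    (hmeas : ∀ i, k₀ ≤ i → i ≤ k → ∀ a b, Measurable[F ((i : ℤ) - 1)] fun ω => M i ω a b)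
    (hγ0 : ∀ i, k₀ ≤ i → i ≤ k → 0 ≤ γ i)
    (hγ : ∀ i, k₀ ≤ i → i ≤ k → γ i * l2 ≤ 1)
    (hlow : ∀ i, k₀ ≤ i → i ≤ k →
      ∀ᵐ ω ∂μ, l1 ≤ (μ[fun ω' => ⨅ j, (hpos i ω').1.eigenvalues j | F ((i : ℤ) - 2)]) ω)
    (hup : ∀ i, k₀ ≤ i → i ≤ k → ∀ᵐ ω ∂μ, (⨆ j, (hpos i ω).1.eigenvalues j) ≤ l2) :
    ∫ ω, ∏ i ∈ Finset.Icc k₀ k,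
        ‖Matrix.toEuclideanCLM (𝕜 := ℝ) (n := Fin d) (1 - γ i • M i ω)‖ ^ 2 ∂μ ≤
      ∏ i ∈ Finset.Icc k₀ k, (1 - γ i * l1) :=
  stmt17_general μ F k₀ k M γ l1 l2 hl1 hl12 hpos hmeas hγ0 hγ hlow hup
end
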